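/- Let Z be a non-negative real-valued random variable with continuous cumulative distribution function F_Z and finite mean E[Z] < ∞. Then ∫_0^1 E[ Z · 1{ Z > F_Z^{-1}(1 − alpha) } ] d alpha = E[ Z · F_Z(Z) ], where F_Z^{-1} denotes the left-continuous generalized inverse of F_Z. -/

import Mathlib

open MeasureTheory ProbabilityTheory

/-- The cumulative distribution function of a measure on `ℝ`. -/
noncomputable def cdfOf (μ : Measure ℝ) (y : ℝ) : ℝ := (μ (Set.Iic y)).toReal

/-- The left-continuous generalized inverse of a CDF: `F⁻¹(p) = inf {t | p ≤ F t}`. -/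
noncomputable def leftContInv (F : ℝ → ℝ) (p : ℝ) : ℝ := sInf {t : ℝ | p ≤ F t}

/-!
By monotonicity and continuity of `F`, the events `{F⁻¹(1 - α) < Z}` and `{1 - α < F(Z)}`
differ only where `F(Z) = 1 - α`; for fixed `ω` this is a single value of `α`, so the two
families of events agree for a.e. `(α, ω)` and hence, by Fubini, for a.e. `α` up to a null event.
After that substitution, swapping the integrals leaves `∫_0^1 1{1 - α < F(Z ω)} dα = F(Z ω)`
inside the expectation.
-/

open Filter Set Topology

section LeftContInv

variable {F : ℝ → ℝ} {p z : ℝ}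

lemma le_of_leftContInv_lt (hF : Monotone F) (hbdd : BddBelow {t | p ≤ F t})
    (hne : {t | p ≤ F t}.Nonempty) (h : leftContInv F p < z) : p ≤ F z := by
  obtain ⟨t, ht, htz⟩ := (csInf_lt_iff hbdd hne).1 h
  exact ht.trans (hF htz.le)

lemma leftContInv_lt_of_lt (hF : ContinuousAt F z) (hbdd : BddBelow {t | p ≤ F t})
    (h : p < F z) : leftContInv F p < z := by
  have hleft : ∀ᶠ t in 𝓝[<] z, p < F t :=
    (hF.tendsto.mono_left nhdsWithin_le_nhds).eventually (eventually_gt_nhds h)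
  obtain ⟨t, htp, htz⟩ := (hleft.and self_mem_nhdsWithin).exists
  exact (csInf_le hbdd htp.le).trans_lt htz

end LeftContInv

section Cdf

variable {μ : Measure ℝ} {p z : ℝ}

lemma cdfOf_eq_cdf [IsProbabilityMeasure μ] : cdfOf μ = cdf μ := by
  ext x
  rw [cdfOf, cdf_eq_real, measureReal_def]

lemma bddBelow_setOf_le_cdf (hp : 0 < p) : BddBelow {t | p ≤ cdf μ t} := by
  obtain ⟨a, ha⟩ := ((tendsto_cdf_atBot μ).eventually (eventually_lt_nhds hp)).exists
  exact ⟨a, fun t ht => ((monotone_cdf μ).reflect_lt (ha.trans_le ht)).le⟩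

lemma nonempty_setOf_le_cdf (hp : p < 1) : {t | p ≤ cdf μ t}.Nonempty := by
  obtain ⟨t, ht⟩ := ((tendsto_cdf_atTop μ).eventually (eventually_gt_nhds hp)).exists
  exact ⟨t, ht.le⟩

lemma leftContInv_cdf_lt_iff (hμ : ContinuousAt (cdf μ) z) (hp0 : 0 < p) (hp1 : p < 1)
    (hpz : p ≠ cdf μ z) : leftContInv (cdf μ) p < z ↔ p < cdf μ z :=
  ⟨fun h => (le_of_leftContInv_lt (monotone_cdf μ) (bddBelow_setOf_le_cdf hp0)
      (nonempty_setOf_le_cdf hp1) h).lt_of_ne hpz,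
    leftContInv_lt_of_lt hμ (bddBelow_setOf_le_cdf hp0)⟩

end Cdf

lemma ae_prod_fst_ne {α Ω : Type*} [MeasurableSpace α] [MeasurableEq α] [MeasurableSpace Ω]
    {μ : Measure α} [NullSingletonClass μ] [SFinite μ] {ν : Measure Ω} [SFinite ν] {h : Ω → α}
    (hh : Measurable h) : ∀ᵐ q ∂μ.prod ν, q.1 ≠ h q.2 := by
  have hgraph : MeasurableSet {q : α × Ω | q.1 = h q.2} :=
    measurableSet_eq_fun measurable_fst (hh.comp measurable_snd)
  simp only [ae_iff, not_not]
  rw [Measure.prod_apply_symm hgraph]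
  simp

lemma integral_Ioo_indicator_sub_lt {c : ℝ} (hc : c ∈ Icc 0 1) (z : ℝ) :
    ∫ α in Ioo 0 1, {α | 1 - α < c}.indicator (fun _ => z) α = z * c := by
  have hIoi : {α : ℝ | 1 - α < c} = Ioi (1 - c) := by
    ext α
    simp only [mem_ofPred_eq, mem_Ioi]
    constructor <;> intro h <;> linarith
  rw [hIoi, integral_indicator measurableSet_Ioi, Measure.restrict_restrict measurableSet_Ioi,
    Ioi_inter_Ioo, max_eq_left (by linarith [hc.2]), setIntegral_const,
    Real.volume_real_Ioo_of_le (by linarith [hc.1]), smul_eq_mul]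
  ring

lemma integral_Ioo_setIntegral_sub_lt {Ω : Type*} [MeasurableSpace Ω] {P : Measure Ω} [SFinite P]
    {Z u : Ω → ℝ} (hZ : Integrable Z P) (hu : Measurable u) (hu01 : ∀ ω, u ω ∈ Icc 0 1) :
    ∫ α in Ioo 0 1, ∫ ω in {ω | 1 - α < u ω}, Z ω ∂P = ∫ ω, Z ω * u ω ∂P := by
  have hint : Integrable (Function.uncurry fun α ω => {ω | 1 - α < u ω}.indicator Z ω)
      ((volume.restrict (Ioo 0 1)).prod P) :=
    (hZ.comp_snd _).indicator
      (measurableSet_lt (measurable_const.sub measurable_fst) (hu.comp measurable_snd))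
  calc ∫ α in Ioo 0 1, ∫ ω in {ω | 1 - α < u ω}, Z ω ∂P
      = ∫ α in Ioo 0 1, ∫ ω, {ω | 1 - α < u ω}.indicator Z ω ∂P := by
        simp_rw [integral_indicator (measurableSet_lt measurable_const hu)]
    _ = ∫ ω, (∫ α in Ioo 0 1, {α | 1 - α < u ω}.indicator (fun _ => Z ω) α) ∂P :=
        integral_integral_swap hint
    _ = ∫ ω, Z ω * u ω ∂P := by simp_rw [integral_Ioo_indicator_sub_lt (hu01 _)]

theorem integral_CAP_eq_expectation_mul_cdf_general
    {Ω : Type*} [MeasureSpace Ω] [IsProbabilityMeasure (ℙ : Measure Ω)]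
    (Z : Ω → ℝ) (hZmeas : Measurable Z)
    (hZint : Integrable Z ℙ)
    (hcont : Continuous (cdfOf (Measure.map Z ℙ))) :
    ∫ α in Set.Ioo (0 : ℝ) 1,
        (∫ ω in {ω | leftContInv (cdfOf (Measure.map Z ℙ)) (1 - α) < Z ω}, Z ω ∂ℙ)
      = ∫ ω, Z ω * cdfOf (Measure.map Z ℙ) (Z ω) ∂ℙ := by
  set μ := Measure.map Z ℙ
  have : IsProbabilityMeasure μ := Measure.isProbabilityMeasure_map hZmeas.aemeasurable
  rw [cdfOf_eq_cdf] at hcont ⊢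
  have hu : Measurable fun ω => cdf μ (Z ω) := (monotone_cdf μ).measurable.comp hZmeas
  have hsets : ∀ᵐ α ∂volume.restrict (Ioo (0 : ℝ) 1),
      {ω | leftContInv (cdf μ) (1 - α) < Z ω} =ᵐ[ℙ] {ω | 1 - α < cdf μ (Z ω)} := by
    filter_upwards [ae_restrict_mem measurableSet_Ioo,
      Measure.ae_ae_of_ae_prod (ae_prod_fst_ne (μ := volume.restrict (Ioo (0 : ℝ) 1)) (ν := ℙ)
        (hu.const_sub 1))] with α ⟨hα0, hα1⟩ hα
    filter_upwards [hα] with ω hω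
    exact propext (leftContInv_cdf_lt_iff hcont.continuousAt (by linarith) (by linarith)
      fun h => hω (by linarith))
  calc ∫ α in Ioo 0 1, ∫ ω in {ω | leftContInv (cdf μ) (1 - α) < Z ω}, Z ω ∂ℙ
      = ∫ α in Ioo 0 1, ∫ ω in {ω | 1 - α < cdf μ (Z ω)}, Z ω ∂ℙ :=
        integral_congr_ae (hsets.mono fun α h => setIntegral_congr_set h)
    _ = ∫ ω, Z ω * cdf μ (Z ω) ∂ℙ :=
        integral_Ioo_setIntegral_sub_lt hZint hu fun ω => ⟨cdf_nonneg μ _, cdf_le_one μ _⟩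

/-- **Integrated CAP-type identity.**
Let `Z` be a non-negative real-valued random variable with continuous CDF `F_Z` and finite
mean. Then `∫_0^1 E[Z · 1{Z > F_Z⁻¹(1−α)}] dα = E[Z · F_Z(Z)]`, where `F_Z⁻¹` is the
left-continuous generalized inverse of `F_Z`. -/
theorem integral_CAP_eq_expectation_mul_cdf
    {Ω : Type*} [MeasureSpace Ω] [IsProbabilityMeasure (ℙ : Measure Ω)]
    (Z : Ω → ℝ) (hZmeas : Measurable Z) (hZnn : ∀ ω, 0 ≤ Z ω)
    (hZint : Integrable Z ℙ)
    (hcont : Continuous (cdfOf (Measure.map Z ℙ))) :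
    ∫ α in Set.Ioo (0 : ℝ) 1,
        (∫ ω in {ω | leftContInv (cdfOf (Measure.map Z ℙ)) (1 - α) < Z ω}, Z ω ∂ℙ)
      = ∫ ω, Z ω * cdfOf (Measure.map Z ℙ) (Z ω) ∂ℙ :=
  integral_CAP_eq_expectation_mul_cdf_general Z hZmeas hZint hcont
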